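/- For all μ, ν, κ ∈ {1,…,7} one has Σ_{ρ,σ=1}^{7} γ_{ρσ}·γ_{μν}·γ_{ρσκ} = −4·γ_{μν}γ_κ + 6·γ_κγ_{μν} in A, where γ_{ρσ} := (1/2)(γ_ργ_σ − γ_σγ_ρ) and γ_{ρσκ} := (1/6)·Σ_τ sgn(τ)·γ_{τ(ρ)}γ_{τ(σ)}γ_{τ(κ)} (antisymmetrization over the three indices). -/
import Mathlib


noncomputable section

variable {A : Type*} [Ring A] [Algebra ℂ A]

/-- The antisymmetrized product `γ_{ρσ} = (1/2)(γ_ργ_σ − γ_σγ_ρ)`. -/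
def gamma2 (γ : Fin 7 → A) (ρ σ : Fin 7) : A :=
  (2 : ℂ)⁻¹ • (γ ρ * γ σ - γ σ * γ ρ)

/-- The antisymmetrized product `γ_{ρσκ}` (antisymmetrization over the three indices). -/
def gamma3 (γ : Fin 7 → A) (ρ σ κ : Fin 7) : A :=
  (6 : ℂ)⁻¹ • (γ ρ * γ σ * γ κ - γ ρ * γ κ * γ σ - γ σ * γ ρ * γ κ
    + γ σ * γ κ * γ ρ + γ κ * γ ρ * γ σ - γ κ * γ σ * γ ρ)

set_option linter.unusedSectionVars false

def epsZ (μ ν a : Fin 7) : ℤ := if a = μ ∨ a = ν then 1 else -1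

def cZ (μ ν κ ρ σ : Fin 7) : ℤ :=
  if ρ = σ ∨ ρ = κ ∨ σ = κ then 0 else -(epsZ μ ν ρ * epsZ μ ν σ)

def epsC (μ ν a : Fin 7) : ℂ := if a = μ ∨ a = ν then 1 else -1

def cC (μ ν κ ρ σ : Fin 7) : ℂ :=
  if ρ = σ ∨ ρ = κ ∨ σ = κ then 0 else -(epsC μ ν ρ * epsC μ ν σ)

lemma epsC_cast (μ ν a : Fin 7) : epsC μ ν a = ((epsZ μ ν a : ℤ) : ℂ) := by
  unfold epsC epsZ
  split <;> norm_num

lemma cC_cast (μ ν κ ρ σ : Fin 7) : cC μ ν κ ρ σ = ((cZ μ ν κ ρ σ : ℤ) : ℂ) := by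
  unfold cC cZ
  split <;> simp [epsC_cast]

theorem scalarZ : ∀ μ ν κ : Fin 7, μ ≠ ν →
    (∑ ρ : Fin 7, ∑ σ : Fin 7, cZ μ ν κ ρ σ) = -4 - 6 * epsZ μ ν κ := by decide

lemma scalarC (μ ν κ : Fin 7) (h : μ ≠ ν) :
    (∑ ρ : Fin 7, ∑ σ : Fin 7, cC μ ν κ ρ σ) = -4 - 6 * epsC μ ν κ := by
  simp only [cC_cast, epsC_cast]
  push_cast
  exact_mod_cast congrArg (fun z : ℤ => (z : ℂ)) (scalarZ μ ν κ h)

section aux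
variable (γ : Fin 7 → A)
  (hγ : ∀ μ ν, γ μ * γ ν + γ ν * γ μ = if μ = ν then (-2 : ℂ) • (1 : A) else 0)
include hγ

lemma gsq (a : Fin 7) : γ a * γ a = (-1 : ℂ) • 1 := by
  have h := hγ a a
  rw [if_pos rfl] at h
  have h2 : (2 : ℂ) • (γ a * γ a) = (2 : ℂ) • ((-1 : ℂ) • (1 : A)) := by
    calc (2 : ℂ) • (γ a * γ a) = γ a * γ a + γ a * γ a := two_smul ℂ _
    _ = (-2 : ℂ) • 1 := h
    _ = (2 : ℂ) • ((-1 : ℂ) • (1 : A)) := by rw [smul_smul]; norm_num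
  exact smul_right_injective A (by norm_num : (2:ℂ) ≠ 0) h2

lemma ac {a b : Fin 7} (h : a ≠ b) : γ a * γ b = -(γ b * γ a) := by
  have h' := hγ a b
  rw [if_neg h] at h'
  exact add_eq_zero_iff_eq_neg.mp h'

lemma ac' {a b : Fin 7} (h : a ≠ b) : ∀ x : A, γ a * (γ b * x) = -(γ b * (γ a * x)) :=
  fun x => by rw [← mul_assoc, ac γ hγ h, neg_mul, mul_assoc]

lemma gamma2_same (a : Fin 7) : gamma2 γ a a = 0 := by
  simp [gamma2]

lemma gamma2_ne {a b : Fin 7} (h : a ≠ b) : gamma2 γ a b = γ a * γ b := by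
  have hba : γ b * γ a = -(γ a * γ b) := ac γ hγ h.symm
  rw [gamma2, hba, sub_neg_eq_add, ← two_smul ℂ, smul_smul]
  norm_num

lemma gamma3_aab (a b : Fin 7) : gamma3 γ a a b = 0 := by
  rw [gamma3, show γ a * γ a * γ b - γ a * γ b * γ a - γ a * γ a * γ b
    + γ a * γ b * γ a + γ b * γ a * γ a - γ b * γ a * γ a = 0 by abel, smul_zero]

lemma gamma3_aba (a b : Fin 7) : gamma3 γ a b a = 0 := by
  rw [gamma3, show γ a * γ b * γ a - γ a * γ a * γ b - γ b * γ a * γ a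
    + γ b * γ a * γ a + γ a * γ a * γ b - γ a * γ b * γ a = 0 by abel, smul_zero]

lemma gamma3_abb (a b : Fin 7) : gamma3 γ a b b = 0 := by
  rw [gamma3, show γ a * γ b * γ b - γ a * γ b * γ b - γ b * γ a * γ b
    + γ b * γ b * γ a + γ b * γ a * γ b - γ b * γ b * γ a = 0 by abel, smul_zero]

lemma gamma3_ne {a b c : Fin 7} (hab : a ≠ b) (hac : a ≠ c) (hbc : b ≠ c) :
    gamma3 γ a b c = γ a * γ b * γ c := by
  have hba : γ b * γ a = -(γ a * γ b) := ac γ hγ hab.symm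
  have hca : γ c * γ a = -(γ a * γ c) := ac γ hγ hac.symm
  have hcb : γ c * γ b = -(γ b * γ c) := ac γ hγ hbc.symm
  have hba' := ac' γ hγ hab.symm
  have hca' := ac' γ hγ hac.symm
  have hcb' := ac' γ hγ hbc.symm
  have hinner : γ a * γ b * γ c - γ a * γ c * γ b - γ b * γ a * γ c
      + γ b * γ c * γ a + γ c * γ a * γ b - γ c * γ b * γ a
      = (6 : ℂ) • (γ a * (γ b * γ c)) := by
    simp only [mul_assoc, hba, hca, hcb, hba', hca', hcb', mul_neg, neg_mul, neg_neg,
      sub_neg_eq_add]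
    module
  rw [gamma3, hinner, smul_smul]
  norm_num
  rw [mul_assoc]

lemma gsq' (a : Fin 7) : ∀ x : A, γ a * (γ a * x) = (-1 : ℂ) • x := fun x => by
  rw [← mul_assoc, gsq γ hγ, smul_mul_assoc, one_mul]

lemma sandwich {μ ν : Fin 7} (hμν : μ ≠ ν) (a : Fin 7) :
    γ a * (γ μ * γ ν) * γ a = epsC μ ν a • (γ μ * γ ν) := by
  by_cases h1 : a = μ
  · subst h1
    rw [show epsC a ν a = 1 by simp [epsC]]
    simp only [mul_assoc, gsq' γ hγ, smul_mul_assoc, one_mul, ac γ hγ (Ne.symm hμν),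
      mul_neg, neg_neg, smul_neg, neg_smul, one_smul]
    rw [ac γ hγ hμν, neg_mul]
  by_cases h2 : a = ν
  · subst h2
    rw [show epsC μ a a = 1 by simp [epsC]]
    simp only [mul_assoc, gsq γ hγ, mul_smul_comm, mul_one, ac γ hγ h1,
      mul_neg, neg_neg, smul_neg, neg_smul, one_smul]
  · rw [show epsC μ ν a = -1 by simp [epsC, h1, h2]]
    simp only [mul_assoc, ac γ hγ (fun h => h2 h.symm : ν ≠ a), mul_neg, neg_neg,
      neg_mul, ac' γ hγ h1, gsq' γ hγ, mul_smul_comm, neg_smul, one_smul, smul_neg]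

lemma gflip {μ ν : Fin 7} (hμν : μ ≠ ν) (κ : Fin 7) :
    γ κ * (γ μ * γ ν) = (-(epsC μ ν κ)) • ((γ μ * γ ν) * γ κ) := by
  by_cases h1 : κ = μ
  · subst h1
    rw [show epsC κ ν κ = 1 by simp [epsC]]
    simp only [mul_assoc, gsq' γ hγ, ac γ hγ (Ne.symm hμν), mul_neg, neg_neg,
      smul_neg, neg_smul, one_smul]
  by_cases h2 : κ = ν
  · subst h2
    rw [show epsC μ κ κ = 1 by simp [epsC]]
    simp only [mul_assoc, ac' γ hγ h1, gsq γ hγ, mul_smul_comm, mul_one,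
      mul_neg, neg_neg, smul_neg, neg_smul, one_smul]
  · rw [show epsC μ ν κ = -1 by simp [epsC, h1, h2]]
    simp only [mul_assoc, ac' γ hγ h1, ac γ hγ h2, mul_neg, neg_neg,
      smul_neg, neg_smul, one_smul]

lemma key {μ ν : Fin 7} (hμν : μ ≠ ν) (κ ρ σ : Fin 7) :
    gamma2 γ ρ σ * gamma2 γ μ ν * gamma3 γ ρ σ κ = cC μ ν κ ρ σ • (γ μ * γ ν * γ κ) := by
  by_cases hρσ : ρ = σ
  · subst hρσ
    rw [gamma2_same γ hγ, zero_mul, zero_mul, show cC μ ν κ ρ ρ = 0 by simp [cC], zero_smul]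
  by_cases hρκ : ρ = κ
  · subst hρκ
    rw [gamma3_aba γ hγ, mul_zero, show cC μ ν ρ ρ σ = 0 by simp [cC], zero_smul]
  by_cases hσκ : σ = κ
  · subst hσκ
    rw [gamma3_abb γ hγ, mul_zero, show cC μ ν σ ρ σ = 0 by simp [cC], zero_smul]
  · rw [gamma2_ne γ hγ hρσ, gamma2_ne γ hγ hμν, gamma3_ne γ hγ hρσ hρκ hσκ,
      show cC μ ν κ ρ σ = -(epsC μ ν ρ * epsC μ ν σ) by simp [cC, hρσ, hρκ, hσκ]]
    have hW : γ ρ * γ σ * (γ μ * γ ν) * (γ ρ * γ σ)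
        = (-(epsC μ ν ρ * epsC μ ν σ)) • (γ μ * γ ν) := by
      nth_rw 2 [ac γ hγ hρσ]
      rw [mul_neg, show γ ρ * γ σ * (γ μ * γ ν) * (γ σ * γ ρ)
          = γ ρ * (γ σ * (γ μ * γ ν) * γ σ) * γ ρ by noncomm_ring,
        sandwich γ hγ hμν σ, mul_smul_comm, smul_mul_assoc, sandwich γ hγ hμν ρ,
        smul_smul, ← neg_smul]
      ring_nf
    calc γ ρ * γ σ * (γ μ * γ ν) * (γ ρ * γ σ * γ κ)
        = (γ ρ * γ σ * (γ μ * γ ν) * (γ ρ * γ σ)) * γ κ := by noncomm_ring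
      _ = ((-(epsC μ ν ρ * epsC μ ν σ)) • (γ μ * γ ν)) * γ κ := by rw [hW]
      _ = (-(epsC μ ν ρ * epsC μ ν σ)) • (γ μ * γ ν * γ κ) := by rw [smul_mul_assoc]

theorem gamma_sandwich_three'
    {μ ν κ : Fin 7} :
    ∑ ρ : Fin 7, ∑ σ : Fin 7, gamma2 γ ρ σ * gamma2 γ μ ν * gamma3 γ ρ σ κ
      = (-4 : ℂ) • (gamma2 γ μ ν * γ κ) + (6 : ℂ) • (γ κ * gamma2 γ μ ν) := by
  rcases eq_or_ne μ ν with h | hμν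
  · subst h
    simp [gamma2_same γ hγ]
  · have hsum : ∀ ρ : Fin 7, ∑ σ : Fin 7, gamma2 γ ρ σ * gamma2 γ μ ν * gamma3 γ ρ σ κ
        = (∑ σ : Fin 7, cC μ ν κ ρ σ) • (γ μ * γ ν * γ κ) := fun ρ => by
      rw [Finset.sum_smul]
      exact Finset.sum_congr rfl fun σ _ => key γ hγ hμν κ ρ σ
    rw [Finset.sum_congr rfl fun ρ _ => hsum ρ, ← Finset.sum_smul, scalarC μ ν κ hμν,
      gamma2_ne γ hγ hμν, gflip γ hγ hμν κ, smul_smul, ← add_smul]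
    congr 1
    ring

end aux

/-- For all `μ, ν, κ ∈ {1,…,7}`:
`Σ_{ρ,σ=1}^{7} γ_{ρσ}·γ_{μν}·γ_{ρσκ} = −4·γ_{μν}γ_κ + 6·γ_κγ_{μν}`. -/
theorem gamma_sandwich_three
    (γ : Fin 7 → A)
    (hγ : ∀ μ ν, γ μ * γ ν + γ ν * γ μ = if μ = ν then (-2 : ℂ) • (1 : A) else 0)
    (μ ν κ : Fin 7) :
    ∑ ρ : Fin 7, ∑ σ : Fin 7, gamma2 γ ρ σ * gamma2 γ μ ν * gamma3 γ ρ σ κ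
      = (-4 : ℂ) • (gamma2 γ μ ν * γ κ) + (6 : ℂ) • (γ κ * gamma2 γ μ ν) :=
  gamma_sandwich_three' γ hγ (μ := μ) (ν := ν) (κ := κ)

end
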